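/- If a cirquent C has a CL5 proof in which no cirquent contains two distinct ogroups that share a common oformula, then C is provable in CL5⁻ (in fact, that proof contains no application of duplication). -/

import Mathlib

/-!
A duplication step puts two copies of one ogroup next to each other: downward
duplication in its conclusion, upward duplication in its premise. Every ogroup
in a CL5 proof is nonempty, since the axioms only introduce nonempty ogroups and
no rule empties one, and two copies of a nonempty ogroup share an oformula.
-/

namespace CirquentCalc

/-- Formulas: literals (negation applied only to atoms), ∧, ∨. -/
inductive Fml where
  | pos : ℕ → Fml
  | neg : ℕ → Fml
  | and : Fml → Fml → Fml
  | or : Fml → Fml → Fml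
deriving DecidableEq

namespace Fml

/-- Negation (pushed to atoms, as ¬ applies only to atoms). -/
def negate : Fml → Fml
  | pos n => neg n
  | neg n => pos n
  | and a b => or a.negate b.negate
  | or a b => and a.negate b.negate

/-- Substitution extended homomorphically. -/
def subst (σ : ℕ → Fml) : Fml → Fml
  | pos n => σ n
  | neg n => (σ n).negate
  | and a b => and (a.subst σ) (b.subst σ)
  | or a b => or (a.subst σ) (b.subst σ)

/-- Classical evaluation under a truth assignment. -/
def eval (v : ℕ → Bool) : Fml → Bool
  | pos n => v n
  | neg n => !(v n)
  | and a b => a.eval v && b.eval v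
  | or a b => a.eval v || b.eval v

/-- Number of positive occurrences of atom `a`. -/
def cPos (a : ℕ) : Fml → ℕ
  | pos n => if n = a then 1 else 0
  | neg _ => 0
  | and f g => f.cPos a + g.cPos a
  | or f g => f.cPos a + g.cPos a

/-- Number of negative occurrences of atom `a`. -/
def cNeg (a : ℕ) : Fml → ℕ
  | pos _ => 0
  | neg n => if n = a then 1 else 0
  | and f g => f.cNeg a + g.cNeg a
  | or f g => f.cNeg a + g.cNeg a

/-- Total number of positive occurrences of atoms. -/
def posOcc : Fml → ℕ
  | pos _ => 1
  | neg _ => 0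
  | and f g => f.posOcc + g.posOcc
  | or f g => f.posOcc + g.posOcc

/-- Length: total number of occurrences of literals and connectives. -/
def len : Fml → ℕ
  | pos _ => 1
  | neg _ => 1
  | and f g => f.len + g.len + 1
  | or f g => f.len + g.len + 1

/-- Number of occurrences of ∧. -/
def nAnd : Fml → ℕ
  | pos _ => 0
  | neg _ => 0
  | and f g => f.nAnd + g.nAnd + 1
  | or f g => f.nAnd + g.nAnd

/-- Number of occurrences of ∨. -/
def nOr : Fml → ℕ
  | pos _ => 0
  | neg _ => 0
  | and f g => f.nOr + g.nOr
  | or f g => f.nOr + g.nOr + 1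

end Fml

def Tautology (A : Fml) : Prop := ∀ v, A.eval v = true

/-- No atom has more than two occurrences. -/
def Binary (A : Fml) : Prop := ∀ a, A.cPos a + A.cNeg a ≤ 2

/-- Whenever an atom occurs twice, one occurrence is positive and one negative. -/
def Normal (A : Fml) : Prop := ∀ a, A.cPos a ≤ 1 ∧ A.cNeg a ≤ 1

def AtomicLevel (σ : ℕ → Fml) : Prop := ∀ n, ∃ m, σ n = Fml.pos m

/-- `F` is an instance of `B`: σ(B) = F for some substitution σ. -/
def InstanceOf (F B : Fml) : Prop := ∃ σ, B.subst σ = F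

/-- `F` is an atomic-level instance of `B`. -/
def AtomicInstanceOf (F B : Fml) : Prop := ∃ σ, AtomicLevel σ ∧ B.subst σ = F

/-- A cirquent: a pool of (occurrences of) formulas, and a list of ogroups,
each an (index-)set of oformulas of the pool. -/
structure Cirquent where
  pool : List Fml
  groups : List (Finset ℕ)

def emptyCirquent : Cirquent := ⟨[], []⟩

def idCirquent (F : Fml) : Cirquent := ⟨[F.negate, F], [{0, 1}]⟩

/-- The cirquent with pool ⟨F⟩ and one ogroup containing F. -/
def fmlCirquent (F : Fml) : Cirquent := ⟨[F], [{0}]⟩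

/-- Index renaming swapping `i` and `i+1`. -/
def swapIdx (i : ℕ) : ℕ → ℕ := fun j => if j = i then i + 1 else if j = i + 1 then i else j

/-- Index renaming when a new oformula is inserted at position `i`. -/
def insShift (i : ℕ) : ℕ → ℕ := fun j => if j < i then j else j + 1

/-- Index renaming when the oformulas at positions `i`, `i+1` are merged into one at `i`. -/
def mergeIdx (i : ℕ) : ℕ → ℕ := fun j => if j ≤ i then j else j - 1

/-- Mix: placing the two premise cirquents side by side. -/
def MixStep (A B C : Cirquent) : Prop :=
  C.pool = A.pool ++ B.pool ∧
  C.groups = A.groups ++ B.groups.map (Finset.image (· + A.pool.length))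

/-- Oformula exchange: swap two adjacent oformulas, preserving containment. -/
def OfExchStep (P C : Cirquent) : Prop :=
  ∃ (l₁ l₂ : List Fml) (F G : Fml),
    P.pool = l₁ ++ F :: G :: l₂ ∧ C.pool = l₁ ++ G :: F :: l₂ ∧
    C.groups = P.groups.map (Finset.image (swapIdx l₁.length))

/-- Ogroup exchange: swap two adjacent ogroups. -/
def OgExchStep (P C : Cirquent) : Prop :=
  C.pool = P.pool ∧
  ∃ (g₁ g₂ : List (Finset ℕ)) (Γ Δ : Finset ℕ),
    P.groups = g₁ ++ Γ :: Δ :: g₂ ∧ C.groups = g₁ ++ Δ :: Γ :: g₂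

/-- Pool weakening: insert a new oformula, contained in no ogroup. -/
def PoolWeakStep (P C : Cirquent) : Prop :=
  ∃ (l₁ l₂ : List Fml) (F : Fml),
    P.pool = l₁ ++ l₂ ∧ C.pool = l₁ ++ F :: l₂ ∧
    C.groups = P.groups.map (Finset.image (insShift l₁.length))

/-- Ogroup weakening: add a new arc between a pre-existing ogroup and oformula. -/
def OgWeakStep (P C : Cirquent) : Prop :=
  C.pool = P.pool ∧
  ∃ (g₁ g₂ : List (Finset ℕ)) (Γ : Finset ℕ) (j : ℕ),
    j < P.pool.length ∧ j ∉ Γ ∧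
    P.groups = g₁ ++ Γ :: g₂ ∧ C.groups = g₁ ++ insert j Γ :: g₂

/-- Downward duplication: replace an ogroup by two adjacent copies of it. -/
def DupDownStep (P C : Cirquent) : Prop :=
  C.pool = P.pool ∧
  ∃ (g₁ g₂ : List (Finset ℕ)) (Γ : Finset ℕ),
    P.groups = g₁ ++ Γ :: g₂ ∧ C.groups = g₁ ++ Γ :: Γ :: g₂

/-- Upward duplication: the converse of downward duplication. -/
def DupUpStep (P C : Cirquent) : Prop :=
  C.pool = P.pool ∧
  ∃ (g₁ g₂ : List (Finset ℕ)) (Γ : Finset ℕ),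
    P.groups = g₁ ++ Γ :: Γ :: g₂ ∧ C.groups = g₁ ++ Γ :: g₂

/-- ∨-introduction: merge two adjacent oformulas F, G into F ∨ G. -/
def OrIntroStep (P C : Cirquent) : Prop :=
  ∃ (l₁ l₂ : List Fml) (F G : Fml),
    P.pool = l₁ ++ F :: G :: l₂ ∧ C.pool = l₁ ++ (Fml.or F G) :: l₂ ∧
    C.groups = P.groups.map (Finset.image (mergeIdx l₁.length))

/-- The merging of the ogroup list in ∧-introduction: no ogroup contains both `i`
and `i+1`; every ogroup containing `i` is immediately followed by one containing
`i+1` and vice versa; such pairs are merged. -/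
inductive AndMerge (i : ℕ) : List (Finset ℕ) → List (Finset ℕ) → Prop where
  | nil : AndMerge i [] []
  | skip {Γ : Finset ℕ} {l l' : List (Finset ℕ)} :
      i ∉ Γ → (i + 1) ∉ Γ → AndMerge i l l' → AndMerge i (Γ :: l) (Γ :: l')
  | merge {Γ Δ : Finset ℕ} {l l' : List (Finset ℕ)} :
      i ∈ Γ → (i + 1) ∉ Γ → (i + 1) ∈ Δ → i ∉ Δ →
      AndMerge i l l' → AndMerge i (Γ :: Δ :: l) ((Γ ∪ Δ) :: l')

/-- ∧-introduction. -/
def AndIntroStep (P C : Cirquent) : Prop :=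
  ∃ (l₁ l₂ : List Fml) (F G : Fml) (merged : List (Finset ℕ)),
    P.pool = l₁ ++ F :: G :: l₂ ∧ C.pool = l₁ ++ (Fml.and F G) :: l₂ ∧
    AndMerge l₁.length P.groups merged ∧
    C.groups = merged.map (Finset.image (mergeIdx l₁.length))

inductive RuleName where
  | emptyAx | idAx | mix | ofExch | ogExch | poolWeak | ogWeak
  | dupDown | dupUp | orIntro | andIntro
deriving DecidableEq

/-- The unary (one-premise) rules, by name. -/
def unRel : RuleName → Cirquent → Cirquent → Prop
  | .ofExch => OfExchStep
  | .ogExch => OgExchStep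
  | .poolWeak => PoolWeakStep
  | .ogWeak => OgWeakStep
  | .dupDown => DupDownStep
  | .dupUp => DupUpStep
  | .orIntro => OrIntroStep
  | .andIntro => AndIntroStep
  | _ => fun _ _ => False

/-- Proof trees: each node is labeled by its cirquent and the rule used. -/
inductive PTree where
  | leaf (C : Cirquent) (r : RuleName)
  | un (C : Cirquent) (r : RuleName) (p : PTree)
  | bin (C : Cirquent) (r : RuleName) (p q : PTree)

namespace PTree

def concl : PTree → Cirquent
  | leaf C _ => C
  | un C _ _ => C
  | bin C _ _ _ => C

/-- Validity: each node follows from its children by the named rule. -/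
def Valid : PTree → Prop
  | leaf C r =>
      (r = .emptyAx ∧ C = emptyCirquent) ∨ (r = .idAx ∧ ∃ F, C = idCirquent F)
  | un C r p => p.Valid ∧ unRel r p.concl C
  | bin C r p q => p.Valid ∧ q.Valid ∧ r = .mix ∧ MixStep p.concl q.concl C

/-- Number of applications of rule `r` in the proof. -/
def count (r : RuleName) : PTree → ℕ
  | leaf _ r' => if r' = r then 1 else 0
  | un _ r' p => (if r' = r then 1 else 0) + p.count r
  | bin _ r' p q => (if r' = r then 1 else 0) + p.count r + q.count r

/-- The cirquents occurring in the proof. -/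
def cirquents : PTree → List Cirquent
  | leaf C _ => [C]
  | un C _ p => C :: p.cirquents
  | bin C _ p q => C :: (p.cirquents ++ q.cirquents)

/-- Total number of rule applications (nodes). -/
def nodes : PTree → ℕ
  | leaf _ _ => 1
  | un _ _ p => p.nodes + 1
  | bin _ _ p q => p.nodes + q.nodes + 1

/-- Number of leaves of the proof tree. -/
def leavesCount : PTree → ℕ
  | leaf _ _ => 1
  | un _ _ p => p.leavesCount
  | bin _ _ p q => p.leavesCount + q.leavesCount

end PTree

/-- A proof uses no duplication. -/
def DupFree (p : PTree) : Prop :=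
  p.count RuleName.dupDown = 0 ∧ p.count RuleName.dupUp = 0

/-- Provability of a cirquent in CL5. -/
def ProvesC (C : Cirquent) : Prop := ∃ p : PTree, p.Valid ∧ p.concl = C

/-- Provability of a formula in CL5. -/
def ProvesCL5 (F : Fml) : Prop := ∃ p : PTree, p.Valid ∧ p.concl = fmlCirquent F

/-- Provability of a formula in CL5⁻ (CL5 without duplication). -/
def ProvesCL5m (F : Fml) : Prop :=
  ∃ p : PTree, p.Valid ∧ DupFree p ∧ p.concl = fmlCirquent F

/-- Number of arcs of a cirquent (sum of the sizes of its ogroups). -/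
def Cirquent.arcs (C : Cirquent) : ℕ := (C.groups.map Finset.card).sum

/-- Size of a cirquent: sum of the lengths of the oformulas in its pool plus
the sum of the sizes of its ogroups. -/
def Cirquent.size (C : Cirquent) : ℕ := (C.pool.map Fml.len).sum + C.arcs

/-- Size of a proof: the sum of the sizes of the cirquents it contains. -/
def PTree.size (p : PTree) : ℕ := (p.cirquents.map Cirquent.size).sum

/-- Total number of positive occurrences of atoms in the pool. -/
def Cirquent.poolPosOcc (C : Cirquent) : ℕ := (C.pool.map Fml.posOcc).sum

end CirquentCalc

namespace CirquentCalc

lemma forall_mem_map_image_nonempty {α β : Type*} [DecidableEq β] {f : α → β}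
    {l : List (Finset α)} (h : ∀ Γ ∈ l, Γ.Nonempty) :
    ∀ Γ ∈ l.map (Finset.image f), Γ.Nonempty := by
  simpa [List.forall_mem_map] using h

lemma AndMerge.forall_nonempty {i : ℕ} {l l' : List (Finset ℕ)} (hm : AndMerge i l l')
    (h : ∀ Γ ∈ l, Γ.Nonempty) : ∀ Γ ∈ l', Γ.Nonempty := by
  induction hm with
  | nil => simp
  | skip _ _ _ ih => simp_all
  | merge hΓ _ _ _ _ ih =>
    simp only [List.mem_cons, forall_eq_or_imp] at h ⊢
    exact ⟨⟨_, Finset.mem_union_left _ hΓ⟩, ih h.2.2⟩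

lemma unRel_forall_nonempty {r : RuleName} {P C : Cirquent} (hr : unRel r P C)
    (h : ∀ Γ ∈ P.groups, Γ.Nonempty) : ∀ Γ ∈ C.groups, Γ.Nonempty := by
  cases r <;> simp only [unRel] at hr
  case ofExch | orIntro =>
    obtain ⟨_, _, _, _, _, _, hC⟩ := hr
    exact hC ▸ forall_mem_map_image_nonempty h
  case poolWeak =>
    obtain ⟨_, _, _, _, _, hC⟩ := hr
    exact hC ▸ forall_mem_map_image_nonempty h
  case andIntro =>
    obtain ⟨_, _, _, _, _, _, _, hm, hC⟩ := hr
    exact hC ▸ forall_mem_map_image_nonempty (hm.forall_nonempty h)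
  case ogExch =>
    obtain ⟨_, _, _, _, _, hP, hC⟩ := hr
    simp_all [or_left_comm]
  case ogWeak =>
    obtain ⟨_, g₁, g₂, Γ, j, _, _, hP, hC⟩ := hr
    simp only [hP, hC, List.mem_append, List.mem_cons] at h ⊢
    rintro Δ (hΔ | rfl | hΔ)
    exacts [h Δ (.inl hΔ), Finset.insert_nonempty j Γ, h Δ (.inr (.inr hΔ))]
  case dupDown | dupUp =>
    obtain ⟨_, _, _, _, hP, hC⟩ := hr
    simp_all

lemma PTree.Valid.forall_nonempty {p : PTree} (hv : p.Valid) :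
    ∀ Γ ∈ p.concl.groups, Γ.Nonempty := by
  induction p with
  | leaf C r =>
    rcases hv with ⟨_, rfl⟩ | ⟨_, _, rfl⟩
    · simp [concl, emptyCirquent]
    · simp [concl, idCirquent]
  | un C r p ih => exact unRel_forall_nonempty hv.2 (ih hv.1)
  | bin C r p q ihp ihq =>
    obtain ⟨hp, hq, _, _, hC⟩ := hv
    simp only [concl, hC, List.mem_append] at ihp ihq ⊢
    rintro Γ (hΓ | hΓ)
    exacts [ihp hp Γ hΓ, forall_mem_map_image_nonempty (ihq hq) Γ hΓ]

lemma PTree.concl_mem_cirquents (p : PTree) : p.concl ∈ p.cirquents := by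
  cases p <;> simp [concl, cirquents]

lemma not_pairwise_disjoint_of_adjacent_copies {α : Type*} {g₁ g₂ : List (Finset α)}
    {Γ : Finset α}
    (hΓ : Γ.Nonempty) : ¬ (g₁ ++ Γ :: Γ :: g₂).Pairwise Disjoint := by
  intro h
  have hself : Disjoint Γ Γ :=
    List.rel_of_pairwise_cons (List.pairwise_append.mp h).2.1 List.mem_cons_self
  exact hΓ.ne_empty (disjoint_self.mp hself)

lemma DupDownStep.not_pairwise_disjoint {P C : Cirquent} (h : DupDownStep P C)
    (hP : ∀ Γ ∈ P.groups, Γ.Nonempty) : ¬ C.groups.Pairwise Disjoint := by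
  obtain ⟨_, _, _, Γ, hPg, hCg⟩ := h
  exact hCg ▸ not_pairwise_disjoint_of_adjacent_copies (hP Γ (by simp [hPg]))

lemma DupUpStep.not_pairwise_disjoint {P C : Cirquent} (h : DupUpStep P C)
    (hP : ∀ Γ ∈ P.groups, Γ.Nonempty) : ¬ P.groups.Pairwise Disjoint := by
  obtain ⟨_, _, _, Γ, hPg, _⟩ := h
  exact hPg ▸ not_pairwise_disjoint_of_adjacent_copies (hP Γ (by simp [hPg]))

theorem PTree.dupFree_of_pairwise_disjoint {p : PTree} (hv : p.Valid)
    (hshare : ∀ D ∈ p.cirquents, D.groups.Pairwise Disjoint) : DupFree p := by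
  induction p with
  | leaf C r =>
    rcases hv with ⟨rfl, _⟩ | ⟨rfl, _⟩ <;> exact ⟨rfl, rfl⟩
  | un C r p ih =>
    obtain ⟨hp, hstep⟩ := hv
    have hC := hshare C (by simp [cirquents])
    have hpC := hshare p.concl (by simp [cirquents, concl_mem_cirquents])
    obtain ⟨hdown, hup⟩ := ih hp fun D hD => hshare D (by simp [cirquents, hD])
    have hr_down : r ≠ .dupDown := by
      rintro rfl
      exact DupDownStep.not_pairwise_disjoint hstep hp.forall_nonempty hC
    have hr_up : r ≠ .dupUp := by
      rintro rfl
      exact DupUpStep.not_pairwise_disjoint hstep hp.forall_nonempty hpC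
    simp [DupFree, count, hdown, hup, hr_down, hr_up]
  | bin C r p q ihp ihq =>
    obtain ⟨hp, hq, rfl, _⟩ := hv
    obtain ⟨hp_down, hp_up⟩ := ihp hp fun D hD => hshare D (by simp [cirquents, hD])
    obtain ⟨hq_down, hq_up⟩ := ihq hq fun D hD => hshare D (by simp [cirquents, hD])
    simp [DupFree, count, hp_down, hp_up, hq_down, hq_up]

end CirquentCalc

open CirquentCalc

/-- If a cirquent C has a CL5 proof in which no cirquent contains
two distinct ogroups sharing a common oformula, then C is provable in CL5⁻; in
fact, that proof itself contains no application of duplication. -/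
theorem cl5_no_sharing_implies_cl5m (C : Cirquent) (p : PTree)
    (hv : p.Valid) (hc : p.concl = C)
    (hshare : ∀ D ∈ p.cirquents, D.groups.Pairwise Disjoint) :
    DupFree p ∧ ∃ q : PTree, q.Valid ∧ DupFree q ∧ q.concl = C := by
  have hdup := PTree.dupFree_of_pairwise_disjoint hv hshare
  exact ⟨hdup, p, hv, hdup, hc⟩
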